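/- arXiv:2505.04124 — 4 statements merged into one kernel-verified Lean document; each statement's English description precedes it below -/
import Mathlib

section
/- If (x,n,s) and (x̄,n̄,s̄): U → ℝ³ × Δ are framed surfaces with x̄ = x + λn and n = n̄ for a smooth function λ: U → ℝ with λ ≢ 0, then λ is a non-zero constant. -/
open Matrix Real intervalIntegral

set_option linter.unusedVariables false

noncomputable section

abbrev V3 : Type := Fin 3 → ℝ

/-- partial derivative in the `u` direction -/
def pu {E : Type} [NormedAddCommGroup E] [NormedSpace ℝ E] (f : ℝ × ℝ → E) (p : ℝ × ℝ) : E :=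
  fderiv ℝ f p (1, 0)

/-- partial derivative in the `v` direction -/
def pv {E : Type} [NormedAddCommGroup E] [NormedSpace ℝ E] (f : ℝ × ℝ → E) (p : ℝ × ℝ) : E :=
  fderiv ℝ f p (0, 1)

/-- the third frame vector t = n × s -/
def T3 (n s : ℝ × ℝ → V3) : ℝ × ℝ → V3 := fun p => crossProduct (n p) (s p)

/-- A framed surface: x_u · n = x_v · n = 0, with (n,s) ∈ Δ. -/
structure IsFramedSurface (U : Set (ℝ × ℝ)) (x n s : ℝ × ℝ → V3) : Prop where
  smooth_x : ContDiffOn ℝ (⊤ : ℕ∞) x U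
  smooth_n : ContDiffOn ℝ (⊤ : ℕ∞) n U
  smooth_s : ContDiffOn ℝ (⊤ : ℕ∞) s U
  unit_n : ∀ p ∈ U, n p ⬝ᵥ n p = 1
  unit_s : ∀ p ∈ U, s p ⬝ᵥ s p = 1
  orth_ns : ∀ p ∈ U, n p ⬝ᵥ s p = 0
  tang_u : ∀ p ∈ U, pu x p ⬝ᵥ n p = 0
  tang_v : ∀ p ∈ U, pv x p ⬝ᵥ n p = 0

/-- basic invariants -/
def iA1 (x n s : ℝ × ℝ → V3) (p : ℝ × ℝ) : ℝ := pu x p ⬝ᵥ s p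
def iA2 (x n s : ℝ × ℝ → V3) (p : ℝ × ℝ) : ℝ := pv x p ⬝ᵥ s p
def iB1 (x n s : ℝ × ℝ → V3) (p : ℝ × ℝ) : ℝ := pu x p ⬝ᵥ T3 n s p
def iB2 (x n s : ℝ × ℝ → V3) (p : ℝ × ℝ) : ℝ := pv x p ⬝ᵥ T3 n s p
def iE1 (x n s : ℝ × ℝ → V3) (p : ℝ × ℝ) : ℝ := pu n p ⬝ᵥ s p
def iE2 (x n s : ℝ × ℝ → V3) (p : ℝ × ℝ) : ℝ := pv n p ⬝ᵥ s p
def iF1 (x n s : ℝ × ℝ → V3) (p : ℝ × ℝ) : ℝ := pu n p ⬝ᵥ T3 n s p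
def iF2 (x n s : ℝ × ℝ → V3) (p : ℝ × ℝ) : ℝ := pv n p ⬝ᵥ T3 n s p
def iG1 (x n s : ℝ × ℝ → V3) (p : ℝ × ℝ) : ℝ := pu s p ⬝ᵥ T3 n s p
def iG2 (x n s : ℝ × ℝ → V3) (p : ℝ × ℝ) : ℝ := pv s p ⬝ᵥ T3 n s p

/-- λ ≢ 0 : the set where λ ≠ 0 is dense in U. -/
def DenseNonzero (U : Set (ℝ × ℝ)) (lam : ℝ × ℝ → ℝ) : Prop :=
  ∀ p ∈ U, p ∈ closure {q ∈ U | lam q ≠ 0}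

/-- (n, n̄)-Bertrand framed surface -/
def BertrandNN (U : Set (ℝ × ℝ)) (x n s : ℝ × ℝ → V3) : Prop :=
  ∃ (xb nb sb : ℝ × ℝ → V3) (lam : ℝ × ℝ → ℝ), IsFramedSurface U xb nb sb ∧
    ContDiffOn ℝ (⊤ : ℕ∞) lam U ∧ DenseNonzero U lam ∧
    ∀ p ∈ U, xb p = x p + lam p • n p ∧ nb p = n p

/-- (n, s̄)-Bertrand framed surface -/
def BertrandNS (U : Set (ℝ × ℝ)) (x n s : ℝ × ℝ → V3) : Prop :=
  ∃ (xb nb sb : ℝ × ℝ → V3) (lam : ℝ × ℝ → ℝ), IsFramedSurface U xb nb sb ∧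
    ContDiffOn ℝ (⊤ : ℕ∞) lam U ∧ DenseNonzero U lam ∧
    ∀ p ∈ U, xb p = x p + lam p • n p ∧ sb p = n p

/-- (n, t̄)-Bertrand framed surface -/
def BertrandNT (U : Set (ℝ × ℝ)) (x n s : ℝ × ℝ → V3) : Prop :=
  ∃ (xb nb sb : ℝ × ℝ → V3) (lam : ℝ × ℝ → ℝ), IsFramedSurface U xb nb sb ∧
    ContDiffOn ℝ (⊤ : ℕ∞) lam U ∧ DenseNonzero U lam ∧
    ∀ p ∈ U, xb p = x p + lam p • n p ∧ T3 nb sb p = n p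

/-- (s, n̄)-Bertrand framed surface -/
def BertrandSN (U : Set (ℝ × ℝ)) (x n s : ℝ × ℝ → V3) : Prop :=
  ∃ (xb nb sb : ℝ × ℝ → V3) (lam : ℝ × ℝ → ℝ), IsFramedSurface U xb nb sb ∧
    ContDiffOn ℝ (⊤ : ℕ∞) lam U ∧ DenseNonzero U lam ∧
    ∀ p ∈ U, xb p = x p + lam p • s p ∧ nb p = s p

/-- (s, s̄)-Bertrand framed surface -/
def BertrandSS (U : Set (ℝ × ℝ)) (x n s : ℝ × ℝ → V3) : Prop :=
  ∃ (xb nb sb : ℝ × ℝ → V3) (lam : ℝ × ℝ → ℝ), IsFramedSurface U xb nb sb ∧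
    ContDiffOn ℝ (⊤ : ℕ∞) lam U ∧ DenseNonzero U lam ∧
    ∀ p ∈ U, xb p = x p + lam p • s p ∧ sb p = s p

/-- (s, t̄)-Bertrand framed surface -/
def BertrandST (U : Set (ℝ × ℝ)) (x n s : ℝ × ℝ → V3) : Prop :=
  ∃ (xb nb sb : ℝ × ℝ → V3) (lam : ℝ × ℝ → ℝ), IsFramedSurface U xb nb sb ∧
    ContDiffOn ℝ (⊤ : ℕ∞) lam U ∧ DenseNonzero U lam ∧
    ∀ p ∈ U, xb p = x p + lam p • s p ∧ T3 nb sb p = s p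

/-- (t, n̄)-Bertrand framed surface -/
def BertrandTN (U : Set (ℝ × ℝ)) (x n s : ℝ × ℝ → V3) : Prop :=
  ∃ (xb nb sb : ℝ × ℝ → V3) (lam : ℝ × ℝ → ℝ), IsFramedSurface U xb nb sb ∧
    ContDiffOn ℝ (⊤ : ℕ∞) lam U ∧ DenseNonzero U lam ∧
    ∀ p ∈ U, xb p = x p + lam p • T3 n s p ∧ nb p = T3 n s p
open ContinuousLinearMap in
lemma hasFDerivAt_dot {f g : ℝ × ℝ → V3} {f' g' : (ℝ × ℝ) →L[ℝ] V3} {p : ℝ × ℝ}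
    (hf : HasFDerivAt f f' p) (hg : HasFDerivAt g g' p) :
    HasFDerivAt (fun q => f q ⬝ᵥ g q)
      (∑ i : Fin 3, (f p i • ((proj i : V3 →L[ℝ] ℝ).comp g')
        + g p i • ((proj i : V3 →L[ℝ] ℝ).comp f'))) p := by
  have h : ∀ i : Fin 3, HasFDerivAt (fun q => f q i * g q i)
      (f p i • ((proj i : V3 →L[ℝ] ℝ).comp g') + g p i • ((proj i : V3 →L[ℝ] ℝ).comp f')) p :=
    fun i => ((proj i : V3 →L[ℝ] ℝ).hasFDerivAt.comp p hf).mul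
      ((proj i : V3 →L[ℝ] ℝ).hasFDerivAt.comp p hg)
  have := HasFDerivAt.fun_sum (fun i (_ : i ∈ Finset.univ) => h i)
  simpa [dotProduct] using this

lemma fderiv_dot_apply {f g : ℝ × ℝ → V3} {p : ℝ × ℝ} (w : ℝ × ℝ)
    (hf : DifferentiableAt ℝ f p) (hg : DifferentiableAt ℝ g p) :
    fderiv ℝ (fun q => f q ⬝ᵥ g q) p w
      = (fderiv ℝ f p w) ⬝ᵥ g p + f p ⬝ᵥ (fderiv ℝ g p w) := by
  have h := (hasFDerivAt_dot hf.hasFDerivAt hg.hasFDerivAt).fderiv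
  rw [h]
  simp only [dotProduct, mul_comm, Finset.sum_add_distrib, ContinuousLinearMap.sum_apply,
    Pi.add_apply, ContinuousLinearMap.add_apply, ContinuousLinearMap.smul_apply, Pi.smul_apply,
    smul_eq_mul, Finset.sum_apply, ContinuousLinearMap.coe_comp', Function.comp_apply,
    ContinuousLinearMap.proj_apply]
  ring

/-- for (n,n̄)-mates, λ is a non-zero constant. -/
theorem nn_mate_lambda_constant
    (U : Set (ℝ × ℝ)) (hU : IsOpen U) (hconn : IsConnected U)
    (x n s xb nb sb : ℝ × ℝ → V3) (lam : ℝ × ℝ → ℝ)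
    (h : IsFramedSurface U x n s) (hb : IsFramedSurface U xb nb sb)
    (hlam : ContDiffOn ℝ (⊤ : ℕ∞) lam U) (hdense : DenseNonzero U lam)
    (hx : ∀ p ∈ U, xb p = x p + lam p • n p) (hn : ∀ p ∈ U, nb p = n p) :
    ∃ c : ℝ, c ≠ 0 ∧ ∀ p ∈ U, lam p = c := by
  -- differentiability
  have hdx : ∀ p ∈ U, DifferentiableAt ℝ x p := fun p hp =>
    ((h.smooth_x.differentiableOn (by simp)).differentiableAt (hU.mem_nhds hp))
  have hdn : ∀ p ∈ U, DifferentiableAt ℝ n p := fun p hp =>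
    ((h.smooth_n.differentiableOn (by simp)).differentiableAt (hU.mem_nhds hp))
  have hdxb : ∀ p ∈ U, DifferentiableAt ℝ xb p := fun p hp =>
    ((hb.smooth_x.differentiableOn (by simp)).differentiableAt (hU.mem_nhds hp))
  have hdlam : ∀ p ∈ U, DifferentiableAt ℝ lam p := fun p hp =>
    ((hlam.differentiableOn (by simp)).differentiableAt (hU.mem_nhds hp))
  -- n ⬝ fderiv n = 0 on U
  have hnn : ∀ p ∈ U, ∀ w, n p ⬝ᵥ fderiv ℝ n p w = 0 := by
    intro p hp w
    have heq : (fun q => n q ⬝ᵥ n q) =ᶠ[nhds p] (fun _ => (1 : ℝ)) :=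
      Filter.eventuallyEq_of_mem (hU.mem_nhds hp) (fun q hq => h.unit_n q hq)
    have h0 : fderiv ℝ (fun q => n q ⬝ᵥ n q) p = 0 := by
      rw [heq.fderiv_eq]; exact fderiv_const_apply 1
    have h1 := fderiv_dot_apply w (hdn p hp) (hdn p hp)
    rw [h0] at h1
    have h2 : (fderiv ℝ n p w) ⬝ᵥ n p = n p ⬝ᵥ (fderiv ℝ n p w) := dotProduct_comm _ _
    simp only [ContinuousLinearMap.zero_apply] at h1
    nlinarith [h1, h2]
  -- fderiv lam = 0 on U
  have key : ∀ p ∈ U, fderiv ℝ lam p = 0 := by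
    intro p hp
    have heq : lam =ᶠ[nhds p] (fun q => (xb q - x q) ⬝ᵥ n q) := by
      refine Filter.eventuallyEq_of_mem (hU.mem_nhds hp) (fun q hq => ?_)
      rw [hx q hq]
      simp [add_dotProduct, sub_dotProduct, smul_dotProduct,
        h.unit_n q hq]
    have hval : ∀ w : ℝ × ℝ, fderiv ℝ xb p w ⬝ᵥ n p = 0 → fderiv ℝ x p w ⬝ᵥ n p = 0 →
        fderiv ℝ lam p w = 0 := by
      intro w hw1 hw2
      rw [heq.fderiv_eq]
      have hd1 : DifferentiableAt ℝ (fun q => xb q - x q) p := (hdxb p hp).sub (hdx p hp)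
      rw [fderiv_dot_apply w hd1 (hdn p hp)]
      have hsub : fderiv ℝ (fun q => xb q - x q) p w = fderiv ℝ xb p w - fderiv ℝ x p w := by
        rw [fderiv_fun_sub (hdxb p hp) (hdx p hp)]; rfl
      have hxbval : xb p - x p = lam p • n p := by rw [hx p hp]; abel
      rw [hsub, hxbval, sub_dotProduct, hw1, hw2, smul_dotProduct,
        hnn p hp w]
      simp
    have hu : fderiv ℝ lam p (1, 0) = 0 := by
      refine hval _ ?_ (h.tang_u p hp)
      have := hb.tang_u p hp
      rwa [hn p hp] at this
    have hv : fderiv ℝ lam p (0, 1) = 0 := by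
      refine hval _ ?_ (h.tang_v p hp)
      have := hb.tang_v p hp
      rwa [hn p hp] at this
    refine ContinuousLinearMap.ext fun w => ?_
    have hw : w = w.1 • ((1:ℝ), (0:ℝ)) + w.2 • ((0:ℝ), (1:ℝ)) := by
      ext <;> simp
    rw [hw, map_add, (fderiv ℝ lam p).map_smul, (fderiv ℝ lam p).map_smul, hu, hv]
    simp
  -- locally constant
  have hloc : ∀ p ∈ U, ∃ ε > 0, Metric.ball p ε ⊆ U ∧
      ∀ q ∈ Metric.ball p ε, lam q = lam p := by
    intro p hp
    obtain ⟨ε, hε, hball⟩ := Metric.isOpen_iff.1 hU p hp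
    refine ⟨ε, hε, hball, fun q hq => ?_⟩
    refine (convex_ball p ε).is_const_of_fderivWithin_eq_zero
      (fun z hz => ((hdlam z (hball hz)).differentiableWithinAt)) (fun z hz => ?_)
      hq (Metric.mem_ball_self hε)
    rw [fderivWithin_of_isOpen Metric.isOpen_ball hz]
    exact key z (hball hz)
  -- constancy via connectedness
  obtain ⟨p0, hp0⟩ := hconn.nonempty
  have hconst : ∀ p ∈ U, lam p = lam p0 := by
    by_contra hcon
    push_neg at hcon
    obtain ⟨p1, hp1, hne⟩ := hcon
    set S := {p : ℝ × ℝ | ∃ ε > 0, Metric.ball p ε ⊆ U ∧ ∀ q ∈ Metric.ball p ε, lam q = lam p0}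
    set T := {p : ℝ × ℝ | ∃ ε > 0, Metric.ball p ε ⊆ U ∧ ∀ q ∈ Metric.ball p ε, lam q ≠ lam p0}
    have hSopen : IsOpen S := by
      refine Metric.isOpen_iff.2 fun p ⟨ε, hε, hb1, hb2⟩ => ⟨ε, hε, fun q hq => ?_⟩
      obtain ⟨δ, hδ, hb3⟩ := Metric.isOpen_iff.1 Metric.isOpen_ball q hq
      exact ⟨δ, hδ, fun z hz => hb1 (hb3 hz), fun z hz => hb2 z (hb3 hz)⟩
    have hTopen : IsOpen T := by
      refine Metric.isOpen_iff.2 fun p ⟨ε, hε, hb1, hb2⟩ => ⟨ε, hε, fun q hq => ?_⟩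
      obtain ⟨δ, hδ, hb3⟩ := Metric.isOpen_iff.1 Metric.isOpen_ball q hq
      exact ⟨δ, hδ, fun z hz => hb1 (hb3 hz), fun z hz => hb2 z (hb3 hz)⟩
    have hsub : U ⊆ S ∪ T := by
      intro p hp
      obtain ⟨ε, hε, hb1, hb2⟩ := hloc p hp
      by_cases hc : lam p = lam p0
      · exact Or.inl ⟨ε, hε, hb1, fun q hq => (hb2 q hq).trans hc⟩
      · exact Or.inr ⟨ε, hε, hb1, fun q hq => (hb2 q hq).symm ▸ hc⟩
    have hS : (U ∩ S).Nonempty := by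
      obtain ⟨ε, hε, hb1, hb2⟩ := hloc p0 hp0
      exact ⟨p0, hp0, ε, hε, hb1, hb2⟩
    have hT : (U ∩ T).Nonempty := by
      obtain ⟨ε, hε, hb1, hb2⟩ := hloc p1 hp1
      exact ⟨p1, hp1, ε, hε, hb1, fun q hq => (hb2 q hq).symm ▸ hne⟩
    obtain ⟨z, hzU, hzS, hzT⟩ := hconn.isPreconnected S T hSopen hTopen hsub hS hT
    obtain ⟨ε1, hε1, _, hc1⟩ := hzS
    obtain ⟨ε2, hε2, _, hc2⟩ := hzT
    exact hc2 z (Metric.mem_ball_self hε2) (hc1 z (Metric.mem_ball_self hε1))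
  -- the constant is nonzero
  refine ⟨lam p0, ?_, hconst⟩
  intro hc0
  have hempty : {q ∈ U | lam q ≠ 0} = ∅ := by
    ext q
    simp only [Set.mem_setOf_eq, Set.mem_empty_iff_false, iff_false, not_and, not_not]
    intro hq
    rw [hconst q hq, hc0]
  have := hdense p0 hp0
  rw [hempty, closure_empty] at this
  exact this
end
end

section
/- If (x,n,s) and (x̄,n̄,s̄) are (n,s̄)-mates with x̄ = x + λn, n̄ = sin θ·s + cos θ·t, s̄ = n, where λ,θ satisfy the compatibility condition (a_i + λe_i) sin θ + (b_i + λf_i) cos θ = 0 (i=1,2), then the basic invariants of (x̄,n̄,s̄) are: ā₁ = λ_u, ā₂ = λ_v, b̄_i = (a_i + λe_i) cos θ − (b_i + λf_i) sin θ, ē_i = −e_i sin θ − f_i cos θ, f̄₁ = θ_u − g₁, f̄₂ = θ_v − g₂, ḡ_i = e_i cos θ − f_i sin θ. -/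
open Matrix Real intervalIntegral

set_option linter.unusedVariables false

noncomputable section

lemma pd_dot {f g : ℝ × ℝ → V3} {p : ℝ × ℝ}
    (hf : DifferentiableAt ℝ f p) (hg : DifferentiableAt ℝ g p) (w : ℝ × ℝ) :
    fderiv ℝ (fun q => f q ⬝ᵥ g q) p w
      = fderiv ℝ f p w ⬝ᵥ g p + f p ⬝ᵥ fderiv ℝ g p w := by
  have hfi : ∀ i : Fin 3, HasFDerivAt (fun q => f q i)
      ((ContinuousLinearMap.proj i).comp (fderiv ℝ f p)) p := fun i =>
    (ContinuousLinearMap.proj i : V3 →L[ℝ] ℝ).hasFDerivAt.comp p hf.hasFDerivAt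
  have hgi : ∀ i : Fin 3, HasFDerivAt (fun q => g q i)
      ((ContinuousLinearMap.proj i).comp (fderiv ℝ g p)) p := fun i =>
    (ContinuousLinearMap.proj i : V3 →L[ℝ] ℝ).hasFDerivAt.comp p hg.hasFDerivAt
  have h : HasFDerivAt (fun q => f q ⬝ᵥ g q)
      (∑ i : Fin 3, (f p i • (ContinuousLinearMap.proj i).comp (fderiv ℝ g p)
        + g p i • (ContinuousLinearMap.proj i).comp (fderiv ℝ f p))) p := by
    simp only [dotProduct]
    exact HasFDerivAt.fun_sum (fun i _ => ((hfi i).mul (hgi i)))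
  rw [h.fderiv]
  simp [dotProduct, ContinuousLinearMap.sum_apply, ContinuousLinearMap.add_apply,
    ContinuousLinearMap.smul_apply, ContinuousLinearMap.comp_apply,
    ContinuousLinearMap.proj_apply, Finset.sum_add_distrib, Fin.sum_univ_three]
  ring

lemma triple_expand (a b : V3) :
    crossProduct (crossProduct a b) a = (a ⬝ᵥ a) • b - (a ⬝ᵥ b) • a := by
  funext i
  fin_cases i <;>
    simp [cross_apply, dotProduct, Fin.sum_univ_three] <;> ring

lemma diffAt_T3 {n s : ℝ × ℝ → V3} {p : ℝ × ℝ}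
    (hn : DifferentiableAt ℝ n p) (hs : DifferentiableAt ℝ s p) :
    DifferentiableAt ℝ (T3 n s) p := by
  have hni := fun j => differentiableAt_pi.1 hn j
  have hsi := fun j => differentiableAt_pi.1 hs j
  rw [differentiableAt_pi]
  intro i
  simp only [T3, cross_apply]
  fin_cases i <;> simp <;>
    exact ((hni _).mul (hsi _)).sub ((hni _).mul (hsi _))

lemma pd_dot_eq {U : Set (ℝ × ℝ)} (hU : IsOpen U) {p : ℝ × ℝ} (hp : p ∈ U)
    {f g : ℝ × ℝ → V3} {h : ℝ × ℝ → ℝ}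
    (heq : ∀ q ∈ U, f q ⬝ᵥ g q = h q)
    (hf : DifferentiableAt ℝ f p) (hg : DifferentiableAt ℝ g p) (w : ℝ × ℝ) :
    fderiv ℝ f p w ⬝ᵥ g p + f p ⬝ᵥ fderiv ℝ g p w = fderiv ℝ h p w := by
  have hev : (fun q => f q ⬝ᵥ g q) =ᶠ[nhds p] h :=
    Filter.eventually_of_mem (hU.mem_nhds hp) heq
  rw [← pd_dot hf hg w, hev.fderiv_eq]

lemma pd_dot_const {U : Set (ℝ × ℝ)} (hU : IsOpen U) {p : ℝ × ℝ} (hp : p ∈ U)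
    {f g : ℝ × ℝ → V3} {c : ℝ}
    (heq : ∀ q ∈ U, f q ⬝ᵥ g q = c)
    (hf : DifferentiableAt ℝ f p) (hg : DifferentiableAt ℝ g p) (w : ℝ × ℝ) :
    fderiv ℝ f p w ⬝ᵥ g p + f p ⬝ᵥ fderiv ℝ g p w = 0 := by
  rw [pd_dot_eq hU hp (h := fun _ => c) heq hf hg w]
  simp

lemma mate_aux {U : Set (ℝ × ℝ)} (hU : IsOpen U) {p : ℝ × ℝ} (hp : p ∈ U)
    {x n s : ℝ × ℝ → V3} {lam θ : ℝ × ℝ → ℝ}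
    (hx : DifferentiableAt ℝ x p) (hn : DifferentiableAt ℝ n p)
    (hs : DifferentiableAt ℝ s p) (hlam : DifferentiableAt ℝ lam p)
    (hθ : DifferentiableAt ℝ θ p)
    (hun : ∀ q ∈ U, n q ⬝ᵥ n q = 1) (hus : ∀ q ∈ U, s q ⬝ᵥ s q = 1)
    (hons : ∀ q ∈ U, n q ⬝ᵥ s q = 0)
    (w : ℝ × ℝ) (hxw : fderiv ℝ x p w ⬝ᵥ n p = 0) :
    (fderiv ℝ (fun q => x q + lam q • n q) p w ⬝ᵥ n p = fderiv ℝ lam p w) ∧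
    (fderiv ℝ (fun q => x q + lam q • n q) p w ⬝ᵥ
        T3 (fun q => Real.sin (θ q) • s q + Real.cos (θ q) • T3 n s q) n p
      = (fderiv ℝ x p w ⬝ᵥ s p + lam p * (fderiv ℝ n p w ⬝ᵥ s p)) * Real.cos (θ p)
        - (fderiv ℝ x p w ⬝ᵥ T3 n s p + lam p * (fderiv ℝ n p w ⬝ᵥ T3 n s p)) * Real.sin (θ p)) ∧
    (fderiv ℝ (fun q => Real.sin (θ q) • s q + Real.cos (θ q) • T3 n s q) p w ⬝ᵥ n p
      = -(fderiv ℝ n p w ⬝ᵥ s p) * Real.sin (θ p)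
        - (fderiv ℝ n p w ⬝ᵥ T3 n s p) * Real.cos (θ p)) ∧
    (fderiv ℝ (fun q => Real.sin (θ q) • s q + Real.cos (θ q) • T3 n s q) p w ⬝ᵥ
        T3 (fun q => Real.sin (θ q) • s q + Real.cos (θ q) • T3 n s q) n p
      = fderiv ℝ θ p w - fderiv ℝ s p w ⬝ᵥ T3 n s p) ∧
    (fderiv ℝ n p w ⬝ᵥ
        T3 (fun q => Real.sin (θ q) • s q + Real.cos (θ q) • T3 n s q) n p
      = (fderiv ℝ n p w ⬝ᵥ s p) * Real.cos (θ p)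
        - (fderiv ℝ n p w ⬝ᵥ T3 n s p) * Real.sin (θ p)) := by
  have hT : DifferentiableAt ℝ (T3 n s) p := diffAt_T3 hn hs
  -- pointwise dot facts
  have hnn1 : n p ⬝ᵥ n p = 1 := hun p hp
  have hss1 : s p ⬝ᵥ s p = 1 := hus p hp
  have hns0 : n p ⬝ᵥ s p = 0 := hons p hp
  have hsn0 : s p ⬝ᵥ n p = 0 := by rw [dotProduct_comm]; exact hns0
  have hnt0 : n p ⬝ᵥ T3 n s p = 0 := by simp [T3]
  have hst0 : s p ⬝ᵥ T3 n s p = 0 := by simp [T3]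
  have htn0 : T3 n s p ⬝ᵥ n p = 0 := by rw [dotProduct_comm]; exact hnt0
  have hts0 : T3 n s p ⬝ᵥ s p = 0 := by rw [dotProduct_comm]; exact hst0
  have htnU : ∀ q ∈ U, T3 n s q ⬝ᵥ n q = 0 := by
    intro q _; rw [dotProduct_comm]; simp [T3]
  have htsU : ∀ q ∈ U, T3 n s q ⬝ᵥ s q = 0 := by
    intro q _; rw [dotProduct_comm]; simp [T3]
  have httU : ∀ q ∈ U, T3 n s q ⬝ᵥ T3 n s q = 1 := by
    intro q hq
    simp only [T3]
    rw [cross_dot_cross, hun q hq, hus q hq, hons q hq, dotProduct_comm, hons q hq]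
    ring
  have htt1 : T3 n s p ⬝ᵥ T3 n s p = 1 := httU p hp
  -- derivative dot facts
  have hDnn : fderiv ℝ n p w ⬝ᵥ n p = 0 := by
    have h0 := pd_dot_const hU hp hun hn hn w
    rw [dotProduct_comm (n p)] at h0; linarith
  have hDss : fderiv ℝ s p w ⬝ᵥ s p = 0 := by
    have h0 := pd_dot_const hU hp hus hs hs w
    rw [dotProduct_comm (s p)] at h0; linarith
  have hDsn : fderiv ℝ s p w ⬝ᵥ n p = -(fderiv ℝ n p w ⬝ᵥ s p) := by
    have h0 := pd_dot_const hU hp hons hn hs w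
    rw [dotProduct_comm (n p)] at h0; linarith
  have hDtn : fderiv ℝ (T3 n s) p w ⬝ᵥ n p = -(fderiv ℝ n p w ⬝ᵥ T3 n s p) := by
    have h0 := pd_dot_const hU hp htnU hT hn w
    rw [dotProduct_comm (T3 n s p)] at h0; linarith
  have hDts : fderiv ℝ (T3 n s) p w ⬝ᵥ s p = -(fderiv ℝ s p w ⬝ᵥ T3 n s p) := by
    have h0 := pd_dot_const hU hp htsU hT hs w
    rw [dotProduct_comm (T3 n s p)] at h0; linarith
  have hDtt : fderiv ℝ (T3 n s) p w ⬝ᵥ T3 n s p = 0 := by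
    have h0 := pd_dot_const hU hp httU hT hT w
    rw [dotProduct_comm (T3 n s p)] at h0; linarith
  -- vector derivative formulas
  have hXb : fderiv ℝ (fun q => x q + lam q • n q) p w
      = fderiv ℝ x p w + fderiv ℝ lam p w • n p + lam p • fderiv ℝ n p w := by
    rw [fderiv_fun_add (g := fun q => lam q • n q) hx (hlam.smul hn), fderiv_fun_smul hlam hn]
    simp only [ContinuousLinearMap.add_apply, ContinuousLinearMap.smul_apply,
      ContinuousLinearMap.smulRight_apply]
    module
  have hsinD : HasFDerivAt (fun q => Real.sin (θ q)) (Real.cos (θ p) • fderiv ℝ θ p) p :=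
    (Real.hasDerivAt_sin (θ p)).comp_hasFDerivAt p hθ.hasFDerivAt
  have hcosD : HasFDerivAt (fun q => Real.cos (θ q)) ((-Real.sin (θ p)) • fderiv ℝ θ p) p :=
    (Real.hasDerivAt_cos (θ p)).comp_hasFDerivAt p hθ.hasFDerivAt
  have hNb : fderiv ℝ (fun q => Real.sin (θ q) • s q + Real.cos (θ q) • T3 n s q) p w
      = (Real.cos (θ p) * fderiv ℝ θ p w) • s p + Real.sin (θ p) • fderiv ℝ s p w
        + (-Real.sin (θ p) * fderiv ℝ θ p w) • T3 n s p
        + Real.cos (θ p) • fderiv ℝ (T3 n s) p w := by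
    rw [fderiv_fun_add (f := fun q => Real.sin (θ q) • s q) (g := fun q => Real.cos (θ q) • T3 n s q) (hsinD.differentiableAt.smul hs) (hcosD.differentiableAt.smul hT),
        fderiv_fun_smul hsinD.differentiableAt hs, fderiv_fun_smul hcosD.differentiableAt hT,
        hsinD.fderiv, hcosD.fderiv]
    simp only [ContinuousLinearMap.add_apply, ContinuousLinearMap.smul_apply,
      ContinuousLinearMap.smulRight_apply, smul_eq_mul]
    module
  have hTb : T3 (fun q => Real.sin (θ q) • s q + Real.cos (θ q) • T3 n s q) n p
      = Real.cos (θ p) • s p - Real.sin (θ p) • T3 n s p := by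
    simp only [T3]
    rw [map_add, LinearMap.add_apply, _root_.map_smul, _root_.map_smul, LinearMap.smul_apply,
      LinearMap.smul_apply, triple_expand, hnn1, hns0]
    have h1 : crossProduct (s p) (n p) = -(crossProduct (n p) (s p)) :=
      (cross_anticomm _ _).symm
    rw [h1]
    module
  refine ⟨?_, ?_, ?_, ?_, ?_⟩
  · rw [hXb]
    simp only [add_dotProduct, smul_dotProduct, smul_eq_mul, hxw, hDnn, hnn1]
    ring
  · rw [hXb, hTb]
    simp only [add_dotProduct, smul_dotProduct, dotProduct_sub, dotProduct_smul,
      smul_eq_mul, hns0, hnt0, hxw]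
    ring
  · rw [hNb]
    simp only [add_dotProduct, smul_dotProduct, smul_eq_mul, hsn0, htn0, hDsn, hDtn]
    ring
  · rw [hNb, hTb]
    simp only [add_dotProduct, smul_dotProduct, dotProduct_sub, dotProduct_smul,
      smul_eq_mul, hss1, hst0, hts0, htt1, hDss, hDts, hDtt]
    have hpy := sin_sq_add_cos_sq (θ p)
    linear_combination (fderiv ℝ θ p w - fderiv ℝ s p w ⬝ᵥ T3 n s p) * hpy
  · rw [hTb]
    simp only [dotProduct_sub, dotProduct_smul, smul_eq_mul]
    ring

/-- the basic invariants of the (n,s̄)-mate. -/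
theorem ns_mate_invariants
    (U : Set (ℝ × ℝ)) (hU : IsOpen U) (x n s : ℝ × ℝ → V3)
    (h : IsFramedSurface U x n s) (lam θ : ℝ × ℝ → ℝ)
    (hlam : ContDiffOn ℝ (⊤ : ℕ∞) lam U) (hθ : ContDiffOn ℝ (⊤ : ℕ∞) θ U)
    (hdense : DenseNonzero U lam)
    (hcond : ∀ p ∈ U,
      (iA1 x n s p + lam p * iE1 x n s p) * sin (θ p)
        + (iB1 x n s p + lam p * iF1 x n s p) * cos (θ p) = 0 ∧
      (iA2 x n s p + lam p * iE2 x n s p) * sin (θ p)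
        + (iB2 x n s p + lam p * iF2 x n s p) * cos (θ p) = 0)
    (xb nb sb : ℝ × ℝ → V3)
    (hxb : xb = fun p => x p + lam p • n p)
    (hnb : nb = fun p => sin (θ p) • s p + cos (θ p) • T3 n s p)
    (hsb : sb = n)
    (hb : IsFramedSurface U xb nb sb) :
    ∀ p ∈ U,
      iA1 xb nb sb p = pu lam p ∧
      iA2 xb nb sb p = pv lam p ∧
      iB1 xb nb sb p = (iA1 x n s p + lam p * iE1 x n s p) * cos (θ p)
        - (iB1 x n s p + lam p * iF1 x n s p) * sin (θ p) ∧
      iB2 xb nb sb p = (iA2 x n s p + lam p * iE2 x n s p) * cos (θ p)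
        - (iB2 x n s p + lam p * iF2 x n s p) * sin (θ p) ∧
      iE1 xb nb sb p = -iE1 x n s p * sin (θ p) - iF1 x n s p * cos (θ p) ∧
      iE2 xb nb sb p = -iE2 x n s p * sin (θ p) - iF2 x n s p * cos (θ p) ∧
      iF1 xb nb sb p = pu θ p - iG1 x n s p ∧
      iF2 xb nb sb p = pv θ p - iG2 x n s p ∧
      iG1 xb nb sb p = iE1 x n s p * cos (θ p) - iF1 x n s p * sin (θ p) ∧
      iG2 xb nb sb p = iE2 x n s p * cos (θ p) - iF2 x n s p * sin (θ p) := by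
  
  subst hxb hnb hsb
  intro p hp
  have hmem := hU.mem_nhds hp
  have hx := (h.smooth_x.contDiffAt hmem).differentiableAt (by simp)
  have hn := (h.smooth_n.contDiffAt hmem).differentiableAt (by simp)
  have hs := (h.smooth_s.contDiffAt hmem).differentiableAt (by simp)
  have hl := (hlam.contDiffAt hmem).differentiableAt (by simp)
  have ht := (hθ.contDiffAt hmem).differentiableAt (by simp)
  obtain ⟨u1, u2, u3, u4, u5⟩ :=
    mate_aux hU hp hx hn hs hl ht h.unit_n h.unit_s h.orth_ns (1, 0) (h.tang_u p hp)
  obtain ⟨v1, v2, v3, v4, v5⟩ :=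
    mate_aux hU hp hx hn hs hl ht h.unit_n h.unit_s h.orth_ns (0, 1) (h.tang_v p hp)
  exact ⟨u1, v1, u2, v2, u3, v3, u4, v4, u5, v5⟩
end
end

section
/- If (x,n,s) and (x̄,n̄,s̄): U → ℝ³ × Δ are (n,s̄)-mates with x̄ = x + λn, then at each point the matrix with rows (a₁+λe₁, b₁+λf₁) and (a₂+λe₂, b₂+λf₂) has determinant zero, and consequently λ satisfies the quadratic equation K^F λ² − 2H^F λ + J^F = 0, where J^F = a₁b₂ − a₂b₁, K^F = e₁f₂ − e₂f₁, and H^F = −(1/2)((a₁f₂ − a₂f₁) − (b₁e₂ − b₂e₁)). -/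
open Matrix Real intervalIntegral

set_option linter.unusedVariables false

noncomputable section

section Helpers

lemma gram2 (u v n s : V3) :
    (u ⬝ᵥ crossProduct n s) * (v ⬝ᵥ crossProduct n s) =
      (u ⬝ᵥ v) * ((n ⬝ᵥ n) * (s ⬝ᵥ s) - (n ⬝ᵥ s) * (s ⬝ᵥ n))
        - (u ⬝ᵥ n) * ((n ⬝ᵥ v) * (s ⬝ᵥ s) - (n ⬝ᵥ s) * (s ⬝ᵥ v))
        + (u ⬝ᵥ s) * ((n ⬝ᵥ v) * (s ⬝ᵥ n) - (n ⬝ᵥ n) * (s ⬝ᵥ v)) := by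
  simp [dotProduct, crossProduct, Fin.sum_univ_three]
  ring

lemma dot_cross_self0 (n s : V3) : n ⬝ᵥ crossProduct n s = 0 := by
  simp [dotProduct, crossProduct, Fin.sum_univ_three]
  ring

end Helpers
/-- for (n,s̄)-mates, the determinant vanishes and λ satisfies
K^F λ² − 2H^F λ + J^F = 0. -/
theorem ns_mate_caustic_equation
    (U : Set (ℝ × ℝ)) (hU : IsOpen U) (x n s xb nb sb : ℝ × ℝ → V3)
    (lam : ℝ × ℝ → ℝ)
    (h : IsFramedSurface U x n s) (hb : IsFramedSurface U xb nb sb)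
    (hlam : ContDiffOn ℝ (⊤ : ℕ∞) lam U) (hdense : DenseNonzero U lam)
    (hmate : ∀ p ∈ U, xb p = x p + lam p • n p ∧ sb p = n p) :
    ∀ p ∈ U,
      (iA1 x n s p + lam p * iE1 x n s p) * (iB2 x n s p + lam p * iF2 x n s p)
        - (iA2 x n s p + lam p * iE2 x n s p) * (iB1 x n s p + lam p * iF1 x n s p) = 0 ∧
      (iE1 x n s p * iF2 x n s p - iE2 x n s p * iF1 x n s p) * lam p ^ 2
        - 2 * (-(1/2) * ((iA1 x n s p * iF2 x n s p - iA2 x n s p * iF1 x n s p)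
            - (iB1 x n s p * iE2 x n s p - iB2 x n s p * iE1 x n s p))) * lam p
        + (iA1 x n s p * iB2 x n s p - iA2 x n s p * iB1 x n s p) = 0 := by
  intro p hp
  have hUn : U ∈ nhds p := hU.mem_nhds hp
  have hx : DifferentiableAt ℝ x p := (h.smooth_x.contDiffAt hUn).differentiableAt (by simp)
  have hn : DifferentiableAt ℝ n p := (h.smooth_n.contDiffAt hUn).differentiableAt (by simp)
  have hl : DifferentiableAt ℝ lam p := (hlam.contDiffAt hUn).differentiableAt (by simp)
  have hev : xb =ᶠ[nhds p] fun q => x q + lam q • n q :=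
    Filter.eventuallyEq_of_mem hUn (fun q hq => (hmate q hq).1)
  have hder : HasFDerivAt (fun q => x q + lam q • n q)
      (fderiv ℝ x p + (lam p • fderiv ℝ n p + (fderiv ℝ lam p).smulRight (n p))) p :=
    hx.hasFDerivAt.add (hl.hasFDerivAt.smul hn.hasFDerivAt)
  have hfd : fderiv ℝ xb p = fderiv ℝ x p + (lam p • fderiv ℝ n p + (fderiv ℝ lam p).smulRight (n p)) := by
    rw [hev.fderiv_eq, hder.fderiv]
  have hpuxb : pu xb p = pu x p + (lam p • pu n p + pu lam p • n p) := by
    simp [pu, hfd]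
  have hpvxb : pv xb p = pv x p + (lam p • pv n p + pv lam p • n p) := by
    simp [pv, hfd]
  have hns : n p ⬝ᵥ s p = 0 := h.orth_ns p hp
  have hnt : n p ⬝ᵥ crossProduct (n p) (s p) = 0 := dot_cross_self0 _ _
  have hA1 : pu xb p ⬝ᵥ s p = iA1 x n s p + lam p * iE1 x n s p := by
    rw [hpuxb]
    simp [add_dotProduct, smul_dotProduct, iA1, iE1, hns, smul_eq_mul]
  have hA2 : pv xb p ⬝ᵥ s p = iA2 x n s p + lam p * iE2 x n s p := by
    rw [hpvxb]
    simp [add_dotProduct, smul_dotProduct, iA2, iE2, hns, smul_eq_mul]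
  have hB1 : pu xb p ⬝ᵥ crossProduct (n p) (s p) = iB1 x n s p + lam p * iF1 x n s p := by
    rw [hpuxb]
    simp [add_dotProduct, smul_dotProduct, iB1, iF1, T3, hnt, smul_eq_mul]
  have hB2 : pv xb p ⬝ᵥ crossProduct (n p) (s p) = iB2 x n s p + lam p * iF2 x n s p := by
    rw [hpvxb]
    simp [add_dotProduct, smul_dotProduct, iB2, iF2, T3, hnt, smul_eq_mul]
  have hnnb : n p ⬝ᵥ nb p = 0 := by
    have := hb.orth_ns p hp
    rw [(hmate p hp).2] at this
    rw [dotProduct_comm]; exact this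
  have hnbnb : nb p ⬝ᵥ nb p = 1 := hb.unit_n p hp
  have hnn : n p ⬝ᵥ n p = 1 := h.unit_n p hp
  have hss : s p ⬝ᵥ s p = 1 := h.unit_s p hp
  have hsn : s p ⬝ᵥ n p = 0 := by rw [dotProduct_comm]; exact hns
  set A1 := iA1 x n s p + lam p * iE1 x n s p with hA1d
  set A2 := iA2 x n s p + lam p * iE2 x n s p with hA2d
  set B1 := iB1 x n s p + lam p * iF1 x n s p with hB1d
  set B2 := iB2 x n s p + lam p * iF2 x n s p with hB2d
  set al := s p ⬝ᵥ nb p with hal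
  set be := nb p ⬝ᵥ crossProduct (n p) (s p) with hbe
  have hnbn : nb p ⬝ᵥ n p = 0 := by rw [dotProduct_comm]; exact hnnb
  have hnbs : nb p ⬝ᵥ s p = al := by rw [dotProduct_comm]
  have eq1 : B1 * be = -(A1 * al) := by
    have g := gram2 (pu xb p) (nb p) (n p) (s p)
    rw [hb.tang_u p hp, hA1, hB1, hnn, hss, hns, hsn, hnnb] at g
    linarith [g]
  have eq2 : B2 * be = -(A2 * al) := by
    have g := gram2 (pv xb p) (nb p) (n p) (s p)
    rw [hb.tang_v p hp, hA2, hB2, hnn, hss, hns, hsn, hnnb] at g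
    linarith [g]
  have eq3 : be * be = 1 - al * al := by
    have g := gram2 (nb p) (nb p) (n p) (s p)
    rw [hnbnb, hnn, hss, hns, hsn, hnnb, hnbn, hnbs] at g
    linarith [g]
  have hdet : A1 * B2 - A2 * B1 = 0 := by
    linear_combination (al * B2) * eq1 - (al * B1) * eq2 - (A1 * B2 - A2 * B1) * eq3
      + (be * A1) * eq2 - (be * A2) * eq1
  refine ⟨hdet, ?_⟩
  linear_combination hdet
end
end

section
/- Suppose there exist smooth λ^{s,t}, θ^{s,t}: U → ℝ satisfying λ^{s,t}e_i sin θ^{s,t} + (b_i + λ^{s,t}g_i) cos θ^{s,t} = 0 (i = 1,2) for the framed surface (x,n,s), defining the tangential direction framed surface 𝒮ᵗ(x,n,s) = (x + λ^{s,t}s, cos θ^{s,t}t − sin θ^{s,t}n, sin θ^{s,t}t + cos θ^{s,t}n). If one takes λ^{t,s} = −λ^{s,t} and θ^{t,s} = −θ^{s,t}, then the condition λ^{t,s}f̄_i sin θ^{t,s} − (ā_i − λ^{t,s}ḡ_i) cos θ^{t,s} = 0 for the transformed surface holds, the tangential direction map 𝒯ˢ of 𝒮ᵗ(x,n,s) exists,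 and 𝒯ˢ(𝒮ᵗ(x,n,s)) = (x,n,s). -/
open Matrix Real intervalIntegral

set_option linter.unusedVariables false

noncomputable section

section AuxTsSt
variable {E : Type} [NormedAddCommGroup E] [NormedSpace ℝ E]

lemma diffAt_of_contDiffOn {U : Set (ℝ × ℝ)} (hU : IsOpen U) {f : ℝ × ℝ → E}
    (hf : ContDiffOn ℝ (⊤ : ℕ∞) f U) {p : ℝ × ℝ} (hp : p ∈ U) : DifferentiableAt ℝ f p :=
  (hf.contDiffAt (hU.mem_nhds hp)).differentiableAt (by simp)

lemma diffAt_pi_comp {f : ℝ × ℝ → V3} {p : ℝ × ℝ} (hf : DifferentiableAt ℝ f p) (i : Fin 3) :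
    DifferentiableAt ℝ (fun q => f q i) p :=
  ((ContinuousLinearMap.proj i (R := ℝ) (φ := fun _ : Fin 3 => ℝ)).differentiableAt).comp p hf

lemma fderiv_comp_pi (f : ℝ × ℝ → V3) (p w : ℝ × ℝ) (i : Fin 3)
    (hf : DifferentiableAt ℝ f p) :
    fderiv ℝ (fun q => f q i) p w = fderiv ℝ f p w i := by
  have h : (fun q => f q i) = (ContinuousLinearMap.proj i (R := ℝ) (φ := fun _ : Fin 3 => ℝ)) ∘ f := rfl
  rw [h, fderiv_comp p (ContinuousLinearMap.proj i).differentiableAt hf]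
  simp

lemma fderiv_dot (f g : ℝ × ℝ → V3) (p w : ℝ × ℝ)
    (hf : DifferentiableAt ℝ f p) (hg : DifferentiableAt ℝ g p) :
    fderiv ℝ (fun q => f q ⬝ᵥ g q) p w = fderiv ℝ f p w ⬝ᵥ g p + f p ⬝ᵥ fderiv ℝ g p w := by
  have h1 : (fun q => f q ⬝ᵥ g q) = fun q => ∑ i : Fin 3, f q i * g q i := rfl
  rw [h1, fderiv_fun_sum (fun i _ => (show DifferentiableAt ℝ (fun q => f q i * g q i) p from (diffAt_pi_comp hf i).mul (diffAt_pi_comp hg i)))]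
  rw [ContinuousLinearMap.sum_apply]
  have h2 : ∀ i : Fin 3, (fderiv ℝ (fun q => f q i * g q i) p) w
      = fderiv ℝ f p w i * g p i + f p i * fderiv ℝ g p w i := by
    intro i
    rw [fderiv_fun_mul (diffAt_pi_comp hf i) (diffAt_pi_comp hg i)]
    simp [fderiv_comp_pi f p w i hf, fderiv_comp_pi g p w i hg]
    ring
  simp only [h2]
  simp [dotProduct, Fin.sum_univ_three]
  ring

lemma fderiv_smul_fun (c : ℝ × ℝ → ℝ) (f : ℝ × ℝ → V3) (p w : ℝ × ℝ)
    (hc : DifferentiableAt ℝ c p) (hf : DifferentiableAt ℝ f p) :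
    fderiv ℝ (fun q => c q • f q) p w = fderiv ℝ c p w • f p + c p • fderiv ℝ f p w := by
  rw [fderiv_fun_smul hc hf]
  simp
  module

lemma fderiv_zero_of_eqOn {U : Set (ℝ × ℝ)} (hU : IsOpen U) {F : ℝ × ℝ → E} {c : E}
    {p : ℝ × ℝ} (hp : p ∈ U) (h : ∀ q ∈ U, F q = c) (w : ℝ × ℝ) :
    fderiv ℝ F p w = 0 := by
  have he : F =ᶠ[nhds p] fun _ => c := Filter.eventuallyEq_of_mem (hU.mem_nhds hp) h
  rw [he.fderiv_eq, fderiv_fun_const]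
  simp

lemma diffAt_cross {n s : ℝ × ℝ → V3} {p : ℝ × ℝ}
    (hn : DifferentiableAt ℝ n p) (hs : DifferentiableAt ℝ s p) :
    DifferentiableAt ℝ (fun q => crossProduct (n q) (s q)) p := by
  have h : (fun q => crossProduct (n q) (s q))
      = fun q => ![n q 1 * s q 2 - n q 2 * s q 1, n q 2 * s q 0 - n q 0 * s q 2,
          n q 0 * s q 1 - n q 1 * s q 0] := by
    funext q; rw [cross_apply]
  rw [h]
  apply differentiableAt_pi.2
  intro i
  fin_cases i <;> simp <;>
    exact ((diffAt_pi_comp hn _).mul (diffAt_pi_comp hs _)).sub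
      ((diffAt_pi_comp hn _).mul (diffAt_pi_comp hs _))

end AuxTsSt

lemma cross_cross_self' (n s : V3) (hn : n ⬝ᵥ n = 1) (hns : n ⬝ᵥ s = 0) :
    crossProduct (crossProduct n s) n = s := by
  simp [dotProduct, Fin.sum_univ_three] at hn hns
  funext i
  fin_cases i
  · simp [cross_apply]; linear_combination s 0 * hn - n 0 * hns
  · simp [cross_apply]; linear_combination s 1 * hn - n 1 * hns
  · simp [cross_apply]; linear_combination s 2 * hn - n 2 * hns

lemma cross_frame (tp np sp : V3) (θ : ℝ) (h1 : crossProduct tp np = sp) :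
    crossProduct (cos θ • tp - sin θ • np) (sin θ • tp + cos θ • np) = sp := by
  have hpy := sin_sq_add_cos_sq θ
  have h0 : tp 1 * np 2 - tp 2 * np 1 = sp 0 := by rw [← h1]; simp [cross_apply]
  have hh1 : tp 2 * np 0 - tp 0 * np 2 = sp 1 := by rw [← h1]; simp [cross_apply]
  have hh2 : tp 0 * np 1 - tp 1 * np 0 = sp 2 := by rw [← h1]; simp [cross_apply]
  funext i
  fin_cases i
  · simp [cross_apply]
    linear_combination (cos θ ^ 2 + sin θ ^ 2) * h0 + sp 0 * hpy
  · simp [cross_apply]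
    linear_combination (cos θ ^ 2 + sin θ ^ 2) * hh1 + sp 1 * hpy
  · simp [cross_apply]
    linear_combination (cos θ ^ 2 + sin θ ^ 2) * hh2 + sp 2 * hpy

lemma frame_n (tp np : V3) (θ : ℝ) :
    sin (-θ) • (cos θ • tp - sin θ • np) + cos (-θ) • (sin θ • tp + cos θ • np) = np := by
  have hpy := sin_sq_add_cos_sq θ
  funext i
  simp [sin_neg, cos_neg]
  linear_combination np i * hpy

lemma invariant_calc (U : Set (ℝ × ℝ)) (hU : IsOpen U) (x n s : ℝ × ℝ → V3)
    (h : IsFramedSurface U x n s) (lamst θst : ℝ × ℝ → ℝ)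
    (hlamst : ContDiffOn ℝ (⊤ : ℕ∞) lamst U) (hθst : ContDiffOn ℝ (⊤ : ℕ∞) θst U)
    (p : ℝ × ℝ) (hp : p ∈ U) (w : ℝ × ℝ)
    (hcondw : lamst p * (fderiv ℝ n p w ⬝ᵥ s p) * sin (θst p)
        + ((fderiv ℝ x p w ⬝ᵥ T3 n s p) + lamst p * (fderiv ℝ s p w ⬝ᵥ T3 n s p)) * cos (θst p) = 0)
    (htang : fderiv ℝ x p w ⬝ᵥ n p = 0) :
    -lamst p * (fderiv ℝ (fun q => cos (θst q) • T3 n s q - sin (θst q) • n q) p w ⬝ᵥ s p) * sin (-θst p)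
      - ((fderiv ℝ (fun q => x q + lamst q • s q) p w ⬝ᵥ (sin (θst p) • T3 n s p + cos (θst p) • n p))
        - (-lamst p) * (fderiv ℝ (fun q => sin (θst q) • T3 n s q + cos (θst q) • n q) p w ⬝ᵥ s p)) * cos (-θst p) = 0 := by
  have Dx := diffAt_of_contDiffOn hU h.smooth_x hp
  have Dn := diffAt_of_contDiffOn hU h.smooth_n hp
  have Ds := diffAt_of_contDiffOn hU h.smooth_s hp
  have Dl := diffAt_of_contDiffOn hU hlamst hp
  have Dθ := diffAt_of_contDiffOn hU hθst hp
  have Dt : DifferentiableAt ℝ (T3 n s) p := diffAt_cross Dn Ds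
  have Dcos : DifferentiableAt ℝ (fun q => cos (θst q)) p :=
    (Real.differentiable_cos.differentiableAt).comp p Dθ
  have Dsin : DifferentiableAt ℝ (fun q => sin (θst q)) p :=
    (Real.differentiable_sin.differentiableAt).comp p Dθ
  have Dnst : DifferentiableAt ℝ (fun q => cos (θst q) • T3 n s q - sin (θst q) • n q) p :=
    (Dcos.smul Dt).sub (Dsin.smul Dn)
  have Dsst : DifferentiableAt ℝ (fun q => sin (θst q) • T3 n s q + cos (θst q) • n q) p :=
    (Dsin.smul Dt).add (Dcos.smul Dn)
  have hts : ∀ q, T3 n s q ⬝ᵥ s q = 0 := fun q => by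
    rw [dotProduct_comm]; exact dot_cross_self (n q) (s q)
  have hnt : ∀ q, n q ⬝ᵥ T3 n s q = 0 := fun q => dot_self_cross (n q) (s q)
  have hst : s p ⬝ᵥ T3 n s p = 0 := by rw [dotProduct_comm]; exact hts p
  set e : ℝ := fderiv ℝ n p w ⬝ᵥ s p with he
  set g : ℝ := fderiv ℝ s p w ⬝ᵥ T3 n s p with hg
  set b : ℝ := fderiv ℝ x p w ⬝ᵥ T3 n s p with hb
  have hsn : n p ⬝ᵥ fderiv ℝ s p w = -e := by
    have h0 := fderiv_zero_of_eqOn hU hp (F := fun q => n q ⬝ᵥ s q) h.orth_ns w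
    rw [fderiv_dot n s p w Dn Ds] at h0
    rw [← he] at h0; linarith
  have htds : T3 n s p ⬝ᵥ fderiv ℝ s p w = g := by
    rw [dotProduct_comm]
  have hF : fderiv ℝ (fun q => cos (θst q) • T3 n s q - sin (θst q) • n q) p w ⬝ᵥ s p
      = -(cos (θst p) * g) - sin (θst p) * e := by
    have hconst : ∀ q ∈ U, (cos (θst q) • T3 n s q - sin (θst q) • n q) ⬝ᵥ s q = (0:ℝ) := by
      intro q hq
      simp [sub_dotProduct, smul_dotProduct, smul_eq_mul, hts q, h.orth_ns q hq]
    have h0 := fderiv_zero_of_eqOn hU hp hconst w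
    rw [fderiv_dot _ s p w Dnst Ds] at h0
    have hexp : (cos (θst p) • T3 n s p - sin (θst p) • n p) ⬝ᵥ fderiv ℝ s p w
        = cos (θst p) * g - sin (θst p) * (-e) := by
      simp [sub_dotProduct, smul_dotProduct, smul_eq_mul, htds, hsn]
    rw [hexp] at h0
    linarith
  have hG : fderiv ℝ (fun q => sin (θst q) • T3 n s q + cos (θst q) • n q) p w ⬝ᵥ s p
      = -(sin (θst p) * g) + cos (θst p) * e := by
    have hconst : ∀ q ∈ U, (sin (θst q) • T3 n s q + cos (θst q) • n q) ⬝ᵥ s q = (0:ℝ) := by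
      intro q hq
      simp [add_dotProduct, smul_dotProduct, smul_eq_mul, hts q, h.orth_ns q hq]
    have h0 := fderiv_zero_of_eqOn hU hp hconst w
    rw [fderiv_dot _ s p w Dsst Ds] at h0
    have hexp : (sin (θst p) • T3 n s p + cos (θst p) • n p) ⬝ᵥ fderiv ℝ s p w
        = sin (θst p) * g + cos (θst p) * (-e) := by
      simp [add_dotProduct, smul_dotProduct, smul_eq_mul, htds, hsn]
    rw [hexp] at h0
    linarith
  have hA : fderiv ℝ (fun q => x q + lamst q • s q) p w ⬝ᵥ (sin (θst p) • T3 n s p + cos (θst p) • n p)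
      = sin (θst p) * b + lamst p * (sin (θst p) * g - cos (θst p) * e) := by
    have h1 : fderiv ℝ (fun q => x q + lamst q • s q) p w
        = fderiv ℝ x p w + (fderiv ℝ lamst p w • s p + lamst p • fderiv ℝ s p w) := by
      rw [fderiv_fun_add Dx (show DifferentiableAt ℝ (fun q => lamst q • s q) p from Dl.smul Ds)]
      simp [fderiv_smul_fun lamst s p w Dl Ds]
    rw [h1]
    have h2 : fderiv ℝ x p w ⬝ᵥ n p = 0 := htang
    have h3 : s p ⬝ᵥ n p = 0 := by rw [dotProduct_comm]; exact h.orth_ns p hp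
    have h4 : fderiv ℝ s p w ⬝ᵥ n p = -e := by rw [dotProduct_comm]; exact hsn
    have h5 : fderiv ℝ s p w ⬝ᵥ T3 n s p = g := rfl
    simp [add_dotProduct, dotProduct_add, smul_dotProduct,
      dotProduct_smul, smul_eq_mul, h2, h3, h4, h5, hst, hb]
    ring
  rw [hF, hG, hA, sin_neg, cos_neg]
  linear_combination (-(sin (θst p))) * hcondw

/-- the tangential direction maps are inverse operations:
𝒯ˢ(𝒮ᵗ(x,n,s)) = (x,n,s). -/
theorem Ts_of_St
    (U : Set (ℝ × ℝ)) (hU : IsOpen U) (x n s : ℝ × ℝ → V3)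
    (h : IsFramedSurface U x n s)
    (lamst θst : ℝ × ℝ → ℝ)
    (hlamst : ContDiffOn ℝ (⊤ : ℕ∞) lamst U) (hθst : ContDiffOn ℝ (⊤ : ℕ∞) θst U)
    (hcond : ∀ p ∈ U,
      lamst p * iE1 x n s p * sin (θst p)
        + (iB1 x n s p + lamst p * iG1 x n s p) * cos (θst p) = 0 ∧
      lamst p * iE2 x n s p * sin (θst p)
        + (iB2 x n s p + lamst p * iG2 x n s p) * cos (θst p) = 0)
    (xst nst sst : ℝ × ℝ → V3)
    (hxst : xst = fun p => x p + lamst p • s p)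
    (hnst : nst = fun p => cos (θst p) • T3 n s p - sin (θst p) • n p)
    (hsst : sst = fun p => sin (θst p) • T3 n s p + cos (θst p) • n p)
    (lamts θts : ℝ × ℝ → ℝ)
    (hlamts : lamts = fun p => -lamst p) (hθts : θts = fun p => -θst p) :
    (∀ p ∈ U,
      lamts p * iF1 xst nst sst p * sin (θts p)
        - (iA1 xst nst sst p - lamts p * iG1 xst nst sst p) * cos (θts p) = 0 ∧
      lamts p * iF2 xst nst sst p * sin (θts p)
        - (iA2 xst nst sst p - lamts p * iG2 xst nst sst p) * cos (θts p) = 0) ∧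
    (∀ p ∈ U,
      xst p + lamts p • T3 nst sst p = x p ∧
      sin (θts p) • nst p + cos (θts p) • sst p = n p ∧
      T3 nst sst p = s p) :=  by
  subst hxst hnst hsst hlamts hθts
  have hT3 : ∀ p ∈ U, T3 (fun p => cos (θst p) • T3 n s p - sin (θst p) • n p)
      (fun p => sin (θst p) • T3 n s p + cos (θst p) • n p) p = s p := by
    intro p hp
    exact cross_frame (T3 n s p) (n p) (s p) (θst p)
      (cross_cross_self' (n p) (s p) (h.unit_n p hp) (h.orth_ns p hp))
  constructor
  · intro p hp
    have hc := hcond p hp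
    simp only [iE1, iE2, iB1, iB2, iG1, iG2, pu, pv] at hc
    have ht := hT3 p hp
    have htang1 := h.tang_u p hp
    have htang2 := h.tang_v p hp
    simp only [pu, pv] at htang1 htang2
    constructor
    · have key := invariant_calc U hU x n s h lamst θst hlamst hθst p hp (1,0) hc.1 htang1
      simp only [iF1, iA1, iG1, pu]
      rw [ht]
      exact key
    · have key := invariant_calc U hU x n s h lamst θst hlamst hθst p hp (0,1) hc.2 htang2
      simp only [iF2, iA2, iG2, pv]
      rw [ht]
      exact key
  · intro p hp
    have ht := hT3 p hp
    refine ⟨?_, ?_, ht⟩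
    · show x p + lamst p • s p + (-lamst p) • T3 _ _ p = x p
      rw [ht]; module
    · exact frame_n (T3 n s p) (n p) (θst p)
end
end
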